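/- arXiv:2209.06397 — 3 statements merged into one kernel-verified Lean document; each statement's English description precedes it below -/
import Mathlib

section
/- Let p and q be distinct primes, N = p·q, and λ = lcm(p-1, q-1). Then for every natural number r coprime to N, r^(N·λ) ≡ 1 (mod N²). That is, raising any unit modulo N² to the power N·λ yields 1, which eliminates the randomness factor r^N during Paillier decryption. -/
/-! Since `N * λ` is a multiple of `p (p - 1) = φ(p²)` and of `q (q - 1) = φ(q²)`, Euler's theorem
gives `r ^ (N * λ) ≡ 1` modulo `p²` and modulo `q²`; as `p ≠ q`, these moduli are coprime and the
Chinese remainder theorem gives the congruence modulo `N² = p² q²`. -/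

open Nat

theorem Nat.ModEq.pow_of_totient_dvd {r m e : ℕ} (hr : r.Coprime m) (he : φ m ∣ e) :
    r ^ e ≡ 1 [MOD m] := by
  obtain ⟨k, rfl⟩ := he
  simpa [pow_mul] using (Nat.ModEq.pow_totient hr).pow k

theorem Nat.ModEq.pow_mod_prime_sq_of_dvd {p r e : ℕ} (hp : p.Prime) (hr : r.Coprime p)
    (he : p * (p - 1) ∣ e) : r ^ e ≡ 1 [MOD p ^ 2] := by
  refine Nat.ModEq.pow_of_totient_dvd (Nat.Coprime.pow_right 2 hr) ?_
  rwa [Nat.totient_prime_pow_succ hp, pow_one]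

/-- Raising any unit modulo `N²` to the power `N * λ` yields `1`:
`r ^ (N * λ) ≡ 1 [MOD N²]` for `N = p * q` and `λ = lcm (p-1) (q-1)`. -/
theorem paillier_randomness_elimination (p q : ℕ) (hp : p.Prime) (hq : q.Prime)
    (hpq : p ≠ q) (N lam : ℕ) (hN : N = p * q) (hlam : lam = Nat.lcm (p - 1) (q - 1))
    (r : ℕ) (hr : Nat.Coprime r N) :
    r ^ (N * lam) ≡ 1 [MOD N ^ 2] := by
  subst hN hlam
  have hmod_p : r ^ (p * q * Nat.lcm (p - 1) (q - 1)) ≡ 1 [MOD p ^ 2] :=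
    Nat.ModEq.pow_mod_prime_sq_of_dvd hp (Nat.Coprime.coprime_mul_right_right hr)
      (mul_dvd_mul (dvd_mul_right p q) (Nat.dvd_lcm_left _ _))
  have hmod_q : r ^ (p * q * Nat.lcm (p - 1) (q - 1)) ≡ 1 [MOD q ^ 2] :=
    Nat.ModEq.pow_mod_prime_sq_of_dvd hq (Nat.Coprime.coprime_mul_left_right hr)
      (mul_dvd_mul (dvd_mul_left q p) (Nat.dvd_lcm_right _ _))
  have hcop : (p ^ 2).Coprime (q ^ 2) := ((Nat.coprime_primes hp hq).2 hpq).pow 2 2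
  rw [mul_pow]
  exact (Nat.modEq_and_modEq_iff_modEq_mul hcop).1 ⟨hmod_p, hmod_q⟩
end

section
/- Let p and q be distinct primes, N = p·q, and λ = lcm(p-1, q-1). Then for every message m and every randomness r coprime to N, the following identity holds in ZMod (N²): ((1 + N)^m · r^N)^λ = 1 + (m·λ)·N. That is, raising the Paillier ciphertext of m (with base g = 1 + N) to the secret exponent λ produces an element congruent to 1 + m·λ·N modulo N², from which the decryption function L(x) = (x-1)/N followed by multiplication by λ^{-1} mod N recovers m. -/
/-!
Modulo `N²` the base `1 + N` is unipotent, `(1 + N)^k = 1 + kN`, since `N² = 0` kills every higher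
binomial term. The randomness disappears because `Nλ` is a multiple of the Carmichael exponent of
`(ℤ/N²)ˣ ≅ (ℤ/p²)ˣ × (ℤ/q²)ˣ`, namely `lcm(p(p-1), q(q-1))`, which divides `pq · lcm(p-1, q-1)`.
-/

open ArithmeticFunction

theorem one_add_pow_of_sq_eq_zero {R : Type*} [CommRing R] {x : R} (hx : x ^ 2 = 0) (k : ℕ) :
    (1 + x) ^ k = 1 + k * x := by
  induction k with
  | zero => simp
  | succ k ih =>
    rw [pow_succ, ih, Nat.cast_succ]
    linear_combination (k : R) * hx

theorem ZMod.natCast_pow_eq_one_of_carmichael_dvd {n r k : ℕ} (hr : r.Coprime n)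
    (hk : carmichael n ∣ k) : (r : ZMod n) ^ k = 1 := by
  obtain ⟨c, rfl⟩ := hk
  rw [← ZMod.coe_unitOfCoprime r hr, ← Units.val_pow_eq_pow_val, pow_mul, pow_carmichael,
    one_pow, Units.val_one]

theorem carmichael_prime_sq_dvd {p : ℕ} (hp : p.Prime) : carmichael (p ^ 2) ∣ p * (p - 1) := by
  have htot : (p ^ 2).totient = p * (p - 1) := by
    rw [Nat.totient_prime_pow_succ hp 1, pow_one]
  exact htot ▸ carmichael_dvd_totient (p ^ 2)

theorem carmichael_sq_mul_primes_dvd {p q : ℕ} (hp : p.Prime) (hq : q.Prime) (hpq : p ≠ q) :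
    carmichael ((p * q) ^ 2) ∣ p * q * Nat.lcm (p - 1) (q - 1) := by
  have hcop : (p ^ 2).Coprime (q ^ 2) := ((Nat.coprime_primes hp hq).mpr hpq).pow 2 2
  rw [mul_pow, carmichael_mul hcop]
  refine Nat.lcm_dvd ((carmichael_prime_sq_dvd hp).trans ?_) ((carmichael_prime_sq_dvd hq).trans ?_)
  · exact mul_dvd_mul (dvd_mul_right p q) (Nat.dvd_lcm_left _ _)
  · exact mul_dvd_mul (dvd_mul_left q p) (Nat.dvd_lcm_right _ _)

/-- Raising the Paillier ciphertext of `m` (with base `g = 1 + N`) to the secret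
exponent `λ` produces `1 + m * λ * N` in `ZMod (N²)`. -/
theorem paillier_decryption_identity (p q : ℕ) (hp : p.Prime) (hq : q.Prime)
    (hpq : p ≠ q) (N lam : ℕ) (hN : N = p * q) (hlam : lam = Nat.lcm (p - 1) (q - 1))
    (m r : ℕ) (hr : Nat.Coprime r N) :
    ((((1 + N : ℕ) : ZMod (N ^ 2)) ^ m * ((r : ℕ) : ZMod (N ^ 2)) ^ N) ^ lam) =
    ((1 + (m * lam) * N : ℕ) : ZMod (N ^ 2)) := by
  have hN_sq : (N : ZMod (N ^ 2)) ^ 2 = 0 := by exact_mod_cast ZMod.natCast_self (N ^ 2)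
  have hr_unit : (r : ZMod (N ^ 2)) ^ (N * lam) = 1 := by
    refine ZMod.natCast_pow_eq_one_of_carmichael_dvd (Nat.Coprime.pow_right 2 hr) ?_
    subst hN hlam
    exact carmichael_sq_mul_primes_dvd hp hq hpq
  calc ((((1 + N : ℕ) : ZMod (N ^ 2)) ^ m * ((r : ℕ) : ZMod (N ^ 2)) ^ N) ^ lam)
      = (1 + (N : ZMod (N ^ 2))) ^ (m * lam) * (r : ZMod (N ^ 2)) ^ (N * lam) := by
        push_cast
        rw [mul_pow, ← pow_mul, ← pow_mul]
    _ = ((1 + (m * lam) * N : ℕ) : ZMod (N ^ 2)) := by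
        rw [hr_unit, one_add_pow_of_sq_eq_zero hN_sq]
        push_cast
        ring
end

section
/- Let p and q be distinct primes, N = p·q, and λ = lcm(p-1, q-1), and assume λ is coprime to N. Let m₁, m₂ < N be messages and r₁, r₂ natural numbers coprime to N. If the two Paillier ciphertexts with base g = 1 + N coincide in ZMod (N²), i.e., (1 + N)^{m₁} · r₁^N = (1 + N)^{m₂} · r₂^N, then m₁ = m₂. That is, Paillier decryption is well-defined: a ciphertext determines its plaintext message uniquely. -/
/-!
In `ZMod (N ^ 2)` the element `1 + N` satisfies `(1 + N) ^ k = 1 + k * N`, so its powers record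
the exponent modulo `N`. Every `r` coprime to `N` satisfies `r ^ (N * φ N) = 1`, because
`φ (N ^ 2) = N * φ N`. Raising both ciphertexts to the power `φ N` therefore kills the random
factors and leaves `m₁ * φ N ≡ m₂ * φ N [MOD N]`. For `N = p * q` we have
`φ N = (p - 1) * (q - 1)`, whose factors divide `λ` and so are coprime to `N`; cancelling gives
`m₁ ≡ m₂ [MOD N]`, hence `m₁ = m₂`.
-/

open Nat

theorem Nat.totient_sq (n : ℕ) : φ (n ^ 2) = n * φ n := by
  rcases n.eq_zero_or_pos with rfl | hn
  · simp
  have h := totient_gcd_mul_totient_mul n n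
  rw [Nat.gcd_self, ← sq] at h
  rw [← Nat.mul_left_cancel_iff (totient_pos.mpr hn), h]
  ring

theorem Nat.totient_mul_of_prime_of_ne {p q : ℕ} (hp : p.Prime) (hq : q.Prime) (hpq : p ≠ q) :
    φ (p * q) = (p - 1) * (q - 1) := by
  rw [totient_mul ((coprime_primes hp hq).mpr hpq), totient_prime hp, totient_prime hq]

theorem Nat.coprime_totient_of_coprime_lcm {p q : ℕ} (hp : p.Prime) (hq : q.Prime) (hpq : p ≠ q)
    (h : Coprime (Nat.lcm (p - 1) (q - 1)) (p * q)) : Coprime (φ (p * q)) (p * q) := by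
  rw [totient_mul_of_prime_of_ne hp hq hpq]
  exact (h.coprime_dvd_left (dvd_lcm_left _ _)).mul_left (h.coprime_dvd_left (dvd_lcm_right _ _))

namespace ZMod

variable {n : ℕ}

theorem natCast_mul_self_eq_zero : (n : ZMod (n ^ 2)) * n = 0 := by
  rw [← sq, ← Nat.cast_pow, natCast_self]

theorem one_add_pow (k : ℕ) : ((1 + n : ℕ) : ZMod (n ^ 2)) ^ k = 1 + k * n := by
  induction k with
  | zero => simp
  | succ k ih =>
    push_cast at ih ⊢
    linear_combination (1 + (n : ZMod (n ^ 2))) * ih + (k : ZMod (n ^ 2)) * natCast_mul_self_eq_zero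

theorem one_add_pow_eq_one_add_pow_iff (hn : n ≠ 0) {a b : ℕ} :
    ((1 + n : ℕ) : ZMod (n ^ 2)) ^ a = ((1 + n : ℕ) : ZMod (n ^ 2)) ^ b ↔ a ≡ b [MOD n] := by
  rw [one_add_pow, one_add_pow, add_right_inj, ← Nat.ModEq.mul_right_cancel_iff' hn, ← sq]
  exact_mod_cast natCast_eq_natCast_iff _ _ _

theorem pow_mul_totient_eq_one {r : ℕ} (hr : Coprime r n) :
    (r : ZMod (n ^ 2)) ^ (n * φ n) = 1 := by
  rw [← totient_sq]
  exact_mod_cast (natCast_eq_natCast_iff _ _ _).mpr (Nat.ModEq.pow_totient (hr.pow_right 2))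

theorem modEq_of_one_add_pow_mul_pow_eq (hφ : Coprime (φ n) n) {a b r s : ℕ} (hr : Coprime r n)
    (hs : Coprime s n)
    (h : ((1 + n : ℕ) : ZMod (n ^ 2)) ^ a * (r : ZMod (n ^ 2)) ^ n =
      ((1 + n : ℕ) : ZMod (n ^ 2)) ^ b * (s : ZMod (n ^ 2)) ^ n) :
    a ≡ b [MOD n] := by
  have hn : n ≠ 0 := by rintro rfl; simp at hφ
  have h_pow :
      ((1 + n : ℕ) : ZMod (n ^ 2)) ^ (a * φ n) = ((1 + n : ℕ) : ZMod (n ^ 2)) ^ (b * φ n) := by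
    have := congrArg (· ^ φ n) h
    simpa only [mul_pow, ← pow_mul, pow_mul_totient_eq_one hr, pow_mul_totient_eq_one hs,
      mul_one] using this
  exact Nat.ModEq.cancel_right_of_coprime hφ.symm ((one_add_pow_eq_one_add_pow_iff hn).mp h_pow)

end ZMod

/-- Paillier decryption is well-defined: a ciphertext determines its plaintext
message uniquely. -/
theorem paillier_decryption_injective (p q : ℕ) (hp : p.Prime) (hq : q.Prime)
    (hpq : p ≠ q) (N lam : ℕ) (hN : N = p * q) (hlam : lam = Nat.lcm (p - 1) (q - 1))
    (hcl : Nat.Coprime lam N) (m₁ m₂ r₁ r₂ : ℕ) (hm₁ : m₁ < N) (hm₂ : m₂ < N)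
    (hr₁ : Nat.Coprime r₁ N) (hr₂ : Nat.Coprime r₂ N)
    (heq : (((1 + N : ℕ) : ZMod (N ^ 2))) ^ m₁ * ((r₁ : ℕ) : ZMod (N ^ 2)) ^ N =
           (((1 + N : ℕ) : ZMod (N ^ 2))) ^ m₂ * ((r₂ : ℕ) : ZMod (N ^ 2)) ^ N) :
    m₁ = m₂ := by
  subst hN hlam
  have hφ := coprime_totient_of_coprime_lcm hp hq hpq hcl
  exact (ZMod.modEq_of_one_add_pow_mul_pow_eq hφ hr₁ hr₂ heq).eq_of_lt_of_lt hm₁ hm₂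
end
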